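/- (Generalized Walsh theorem, part 1) Let D ⊆ ℂ be a circular domain, let q be a monic complex polynomial of degree d ≥ 1, and let f be a complex polynomial of degree exactly n ≥ 1 all of whose zeros lie in q_∘(D). Then every zero of T_{q,n}(f) lies in q(D), and whenever (u₁,…,uₙ) ∈ ℂⁿ satisfies S_{q,n}(f)(u₁,…,uₙ) = 0, there exists k ∈ {1,…,n} with uₖ ∈ q(D). -/

import Mathlib

open Polynomial

/-- The apolarity form `[f,g]_m`. -/
noncomputable def apol (m : ℕ) (f g : Polynomial ℂ) : ℂ :=
  ∑ k ∈ Finset.range (m + 1),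
    (-1 : ℂ) ^ k * ((m.choose k : ℂ))⁻¹ * f.coeff k * g.coeff (m - k)

/-- The symmetrization `Sym_N(f)` of a polynomial, as a function on `ι → ℂ`
with `N = card ι`. -/
noncomputable def symFun {ι : Type*} [Fintype ι] (f : Polynomial ℂ) (y : ι → ℂ) : ℂ :=
  ∑ k ∈ Finset.range (Fintype.card ι + 1),
    (((Fintype.card ι).choose k : ℂ))⁻¹ * f.coeff k *
      MvPolynomial.eval y (MvPolynomial.esymm ι ℂ k)

/-- A circular domain: an open or closed disk or half-plane, or a complement thereof. -/
def IsCircularDomain (D : Set ℂ) : Prop :=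
  ∃ (α γ : ℝ) (β : ℂ),
    D = {z : ℂ | α * Complex.normSq z + ((starRingEnd ℂ) β * z).re + γ < 0} ∨
    D = {z : ℂ | α * Complex.normSq z + ((starRingEnd ℂ) β * z).re + γ ≤ 0}

/-- `q_∘(D) = {u : q⁻¹(u) ⊆ D}`. -/
def innerImage (q : Polynomial ℂ) (D : Set ℂ) : Set ℂ :=
  {u : ℂ | ∀ z : ℂ, q.eval z = u → z ∈ D}

/-- `S_{q,n}(f)(u₁,…,uₙ) = [f∘q, ∏ⱼ (q - uⱼ)]_{nd}`. -/
noncomputable def Sfun (q : Polynomial ℂ) (n : ℕ) (f : Polynomial ℂ) (u : Fin n → ℂ) : ℂ :=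
  apol (n * q.natDegree) (f.comp q) (∏ j, (q - Polynomial.C (u j)))

/-- The Fischer inner product `⟨f,g⟩_n`. -/
noncomputable def fischer (n : ℕ) (f g : Polynomial ℂ) : ℂ :=
  ∑ k ∈ Finset.range (n + 1),
    ((n.choose k : ℂ))⁻¹ * f.coeff k * (starRingEnd ℂ) (g.coeff k)


/-!
Circular domains are the sets `{z | a‖z‖² + Re(bz) + c ∈ S}` with `S` the open or the closed
negative half-line. The core is Grace's theorem, proved by Laguerre's argument: if all zeros of
`P` (of formal degree `m + 1`, counting zeros at `∞`) lie in such a domain `D` and `w ∉ D`, then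
so do those of the polar derivative `(m + 1) P + (w - z) P'`. Indeed, at a zero `z₀ ∉ D` of the
polar derivative, `(z₀ - w)⁻¹` is the centroid of the `m + 1` points `(z₀ - r)⁻¹` over the
zeros `r` of `P` (a zero at `∞` giving `0`); the Möbius map `z ↦ (z₀ - z)⁻¹` sends `D` to a
circular domain whose quadratic coefficient is the value at `z₀ ∉ D`, hence nonnegative, so the
image is convex and contains that centroid, forcing `w ∈ D`.

Since `[P, (X - w) R]_{m+1}` is a nonzero multiple of `[polar derivative of P, R]_m`, iterating
over the zeros of `∏ⱼ (q - uⱼ)`, all outside `D` when no `uⱼ` lies in `q(D)`, reduces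
`[f∘q, ∏ⱼ (q - uⱼ)]` to a nonzero constant. The statement on `T_{q,n}(f)` is the diagonal case
`u₁ = ⋯ = uₙ`.
-/

open ComplexConjugate

namespace Polynomial

variable {R : Type*} [CommRing R]

noncomputable def polarDeriv (m : ℕ) (w : R) (P : R[X]) : R[X] :=
  (m : R) • P + (C w - X) * derivative P

lemma coeff_polarDeriv (m : ℕ) (w : R) (P : R[X]) (j : ℕ) :
    (polarDeriv m w P).coeff j = ((m : R) - j) * P.coeff j + w * (j + 1) * P.coeff (j + 1) := by
  have hX : (X * derivative P).coeff j = j * P.coeff j := by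
    cases j with
    | zero => simp
    | succ i => rw [coeff_X_mul, coeff_derivative]; push_cast; ring
  simp only [polarDeriv, coeff_add, coeff_smul, sub_mul, coeff_sub, coeff_C_mul,
    coeff_derivative, hX, smul_eq_mul]
  ring

lemma eval_polarDeriv (m : ℕ) (w z : R) (P : R[X]) :
    (polarDeriv m w P).eval z = m * P.eval z + (w - z) * (derivative P).eval z := by
  simp [polarDeriv]

lemma natDegree_polarDeriv_le {m : ℕ} (w : R) {P : R[X]} (hP : P.natDegree ≤ m + 1) :
    (polarDeriv (m + 1) w P).natDegree ≤ m := by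
  rw [natDegree_le_iff_coeff_eq_zero]
  intro j hj
  rw [coeff_polarDeriv, coeff_eq_zero_of_natDegree_lt (by omega : P.natDegree < j + 1),
    mul_zero, add_zero]
  rcases (Nat.succ_le_of_lt hj).eq_or_lt with rfl | hlt
  · push_cast; ring
  · rw [coeff_eq_zero_of_natDegree_lt (by omega), mul_zero]

end Polynomial

section Binomial

variable {K : Type*} [Field K] [CharZero K] {m k : ℕ}

lemma Nat.cast_add_one_mul_inv_choose (hk : k ≤ m) :
    ((m : K) + 1) * ((m + 1).choose k : K)⁻¹ = ((m : K) + 1 - k) * (m.choose k : K)⁻¹ := by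
  have h := congrArg (Nat.cast : ℕ → K) (Nat.choose_mul_succ_eq m k)
  push_cast [Nat.sub_add_comm hk, Nat.cast_sub hk] at h
  have h1 : (m.choose k : K) ≠ 0 := by exact_mod_cast (Nat.choose_pos hk).ne'
  have h2 : ((m + 1).choose k : K) ≠ 0 := by exact_mod_cast (Nat.choose_pos (by omega)).ne'
  field_simp
  linear_combination h

lemma Nat.cast_add_one_mul_inv_choose_add_one (hk : k ≤ m) :
    ((m : K) + 1) * ((m + 1).choose (k + 1) : K)⁻¹ = ((k : K) + 1) * (m.choose k : K)⁻¹ := by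
  have h := congrArg (Nat.cast : ℕ → K) (Nat.add_one_mul_choose_eq m k)
  push_cast at h
  have h1 : (m.choose k : K) ≠ 0 := by exact_mod_cast (Nat.choose_pos hk).ne'
  have h2 : ((m + 1).choose (k + 1) : K) ≠ 0 := by
    exact_mod_cast (Nat.choose_pos (by omega)).ne'
  field_simp
  linear_combination h

end Binomial

lemma apol_sub (m : ℕ) (P Q R : ℂ[X]) : apol m P (Q - R) = apol m P Q - apol m P R := by
  simp only [apol, coeff_sub, mul_sub, Finset.sum_sub_distrib]

lemma apol_C_mul (m : ℕ) (P R : ℂ[X]) (w : ℂ) : apol m P (C w * R) = w * apol m P R := by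
  simp only [apol, coeff_C_mul, Finset.mul_sum]
  exact Finset.sum_congr rfl fun _ _ => by ring

lemma apol_succ_X_mul (m : ℕ) (P R : ℂ[X]) :
    apol (m + 1) P (X * R) = ∑ k ∈ Finset.range (m + 1),
      (-1 : ℂ) ^ k * ((m + 1).choose k : ℂ)⁻¹ * P.coeff k * R.coeff (m - k) := by
  rw [apol, Finset.sum_range_succ, Nat.sub_self, mul_coeff_zero, coeff_X_zero, zero_mul,
    mul_zero, add_zero]
  refine Finset.sum_congr rfl fun k hk => ?_
  rw [Finset.mem_range] at hk
  rw [show m + 1 - k = m - k + 1 by omega, coeff_X_mul]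

lemma apol_succ_of_natDegree_le {m : ℕ} (P : ℂ[X]) {R : ℂ[X]} (hR : R.natDegree ≤ m) :
    apol (m + 1) P R = -∑ k ∈ Finset.range (m + 1),
      (-1 : ℂ) ^ k * ((m + 1).choose (k + 1) : ℂ)⁻¹ * P.coeff (k + 1) * R.coeff (m - k) := by
  rw [apol, Finset.sum_range_succ', Nat.sub_zero,
    coeff_eq_zero_of_natDegree_lt (Nat.lt_succ_of_le hR), mul_zero, add_zero,
    ← Finset.sum_neg_distrib]
  refine Finset.sum_congr rfl fun k _ => ?_
  rw [Nat.add_sub_add_right, pow_succ]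
  ring

theorem apol_polarDeriv {m : ℕ} (w : ℂ) (P : ℂ[X]) {R : ℂ[X]} (hR : R.natDegree ≤ m) :
    apol m (polarDeriv (m + 1) w P) R = (m + 1) * apol (m + 1) P ((X - C w) * R) := by
  rw [sub_mul, apol_sub, apol_C_mul, apol_succ_X_mul, apol_succ_of_natDegree_le P hR, apol,
    mul_neg, mul_sub, mul_neg, sub_neg_eq_add, Finset.mul_sum, Finset.mul_sum, Finset.mul_sum,
    ← Finset.sum_add_distrib]
  refine Finset.sum_congr rfl fun k hk => ?_
  have hk : k ≤ m := Nat.lt_succ_iff.mp (Finset.mem_range.mp hk)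
  have h1 := Nat.cast_add_one_mul_inv_choose (K := ℂ) hk
  have h2 := Nat.cast_add_one_mul_inv_choose_add_one (K := ℂ) hk
  rw [coeff_polarDeriv]
  push_cast
  linear_combination -((-1 : ℂ) ^ k * P.coeff k * R.coeff (m - k)) * h1 -
    ((-1 : ℂ) ^ k * w * P.coeff (k + 1) * R.coeff (m - k)) * h2

lemma Convex.inv_card_smul_sum_mem {E : Type*} [AddCommGroup E] [Module ℝ E] {s : Set E}
    (hs : Convex ℝ s) {T : Multiset E} (hT : T ≠ 0) (h : ∀ x ∈ T, x ∈ s) :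
    (Multiset.card T : ℝ)⁻¹ • T.sum ∈ s := by
  induction T using Multiset.induction with
  | empty => exact absurd rfl hT
  | cons a t ih =>
    rcases eq_or_ne t 0 with rfl | ht
    · simpa using h a (by simp)
    have hk : (Multiset.card t : ℝ) ≠ 0 := by exact_mod_cast (Multiset.card_pos.mpr ht).ne'
    have hmem := hs (h a (by simp)) (ih ht fun x hx => h x (by simp [hx]))
      (a := 1 / (Multiset.card t + 1)) (b := Multiset.card t / (Multiset.card t + 1))
      (by positivity) (by positivity) (by field_simp; ring)
    convert hmem using 1
    rw [Multiset.card_cons, Multiset.sum_cons]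
    push_cast
    match_scalars <;> field_simp

lemma ConvexOn.convex_preimage_of_isLowerSet {E : Type*} [AddCommGroup E] [Module ℝ E]
    {f : E → ℝ} (hf : ConvexOn ℝ Set.univ f) {S : Set ℝ} (hS : Convex ℝ S)
    (hS' : IsLowerSet S) : Convex ℝ (f ⁻¹' S) := fun _ hx _ hy _ _ hs ht hst =>
  hS' (hf.2 trivial trivial hs ht hst) (hS hx hy hs ht hst)

def circFun (a : ℝ) (b : ℂ) (c : ℝ) (z : ℂ) : ℝ :=
  a * Complex.normSq z + (b * z).re + c

lemma convexOn_circFun {a : ℝ} (ha : 0 ≤ a) (b : ℂ) (c : ℝ) :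
    ConvexOn ℝ Set.univ (circFun a b c) := by
  have hsq : ConvexOn ℝ Set.univ (fun z : ℂ => a * Complex.normSq z) := by
    simpa [← Complex.sq_norm] using
      (convexOn_univ_norm.pow (fun z _ => norm_nonneg z) 2).smul ha
  have hlin : ConvexOn ℝ Set.univ (fun z : ℂ => (b * z).re) :=
    (Complex.reLm.comp ((LinearMap.mulLeft ℂ b).restrictScalars ℝ)).convexOn convex_univ
  exact (hsq.add hlin).add_const c

lemma circFun_inv_sub (a : ℝ) (b : ℂ) (c : ℝ) {z₀ z : ℂ} (h : z₀ ≠ z) :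
    circFun (circFun a b c z₀) (-(2 * a * z₀ + conj b)) a (z₀ - z)⁻¹
      = Complex.normSq (z₀ - z)⁻¹ * circFun a b c z := by
  have hu : z₀ - z ≠ 0 := sub_ne_zero.mpr h
  have hu' : conj z₀ - conj z ≠ 0 := by rw [← map_sub]; exact (_root_.map_ne_zero _).mpr hu
  apply Complex.ofReal_injective
  simp only [circFun, Complex.ofReal_inv, Complex.ofReal_add, Complex.ofReal_mul,
    Complex.normSq_eq_conj_mul_self, Complex.re_eq_add_conj, map_mul, map_add, map_neg,
    map_inv₀, map_sub, Complex.conj_conj, Complex.conj_ofReal, map_ofNat]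
  field_simp
  ring

/-- The cases of interest are `Set.Iio 0` and `Set.Iic 0`. -/
structure IsNegCone (S : Set ℝ) : Prop where
  isLowerSet : IsLowerSet S
  convex : Convex ℝ S
  mul_mem_iff : ∀ {r x : ℝ}, 0 < r → (r * x ∈ S ↔ x ∈ S)
  nonneg_of_notMem : ∀ {x : ℝ}, x ∉ S → 0 ≤ x

lemma isNegCone_Iio : IsNegCone (Set.Iio (0 : ℝ)) where
  isLowerSet := isLowerSet_Iio 0
  convex := convex_Iio 0
  mul_mem_iff hr := by simp [Set.mem_Iio, mul_neg_iff, hr, hr.not_gt]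
  nonneg_of_notMem h := not_lt.mp h

lemma isNegCone_Iic : IsNegCone (Set.Iic (0 : ℝ)) where
  isLowerSet := isLowerSet_Iic 0
  convex := convex_Iic 0
  mul_mem_iff hr := by simp [Set.mem_Iic, mul_nonpos_iff, hr.not_ge, hr.le]
  nonneg_of_notMem h := (not_le.mp h).le

lemma IsCircularDomain.exists_isNegCone {D : Set ℂ} (hD : IsCircularDomain D) :
    ∃ (S : Set ℝ) (a : ℝ) (b : ℂ) (c : ℝ), IsNegCone S ∧ D = circFun a b c ⁻¹' S := by
  obtain ⟨α, γ, β, rfl | rfl⟩ := hD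
  · exact ⟨_, α, conj β, γ, isNegCone_Iio, rfl⟩
  · exact ⟨_, α, conj β, γ, isNegCone_Iic, rfl⟩

namespace IsNegCone

variable {S : Set ℝ} {a : ℝ} {b : ℂ} {c : ℝ}

lemma convex_circFun_preimage (hS : IsNegCone S) (ha : 0 ≤ a) (b : ℂ) (c : ℝ) :
    Convex ℝ (circFun a b c ⁻¹' S) :=
  (convexOn_circFun ha b c).convex_preimage_of_isLowerSet hS.convex hS.isLowerSet

lemma circFun_inv_sub_mem_iff (hS : IsNegCone S) {z₀ z : ℂ} (h : z₀ ≠ z) :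
    circFun (circFun a b c z₀) (-(2 * a * z₀ + conj b)) a (z₀ - z)⁻¹ ∈ S ↔
      circFun a b c z ∈ S := by
  rw [circFun_inv_sub a b c h]
  exact hS.mul_mem_iff (Complex.normSq_pos.mpr (inv_ne_zero (sub_ne_zero.mpr h)))

end IsNegCone

/-- `P`, of formal degree `m`, has all its zeros in `circFun a b c ⁻¹' S`, its
`m - P.natDegree` zeros at `∞` included: `∞` belongs to the domain iff `a ∈ S`. -/
structure ZerosIn (S : Set ℝ) (a : ℝ) (b : ℂ) (c : ℝ) (m : ℕ) (P : ℂ[X]) : Prop where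
  ne_zero : P ≠ 0
  natDegree_le : P.natDegree ≤ m
  root_mem : ∀ z, P.IsRoot z → circFun a b c z ∈ S
  infty_mem : P.natDegree < m → a ∈ S

namespace ZerosIn

variable {S : Set ℝ} {a : ℝ} {b : ℂ} {c : ℝ} {m : ℕ} {P : ℂ[X]} {w : ℂ}

lemma root_polarDeriv_mem (hS : IsNegCone S) (hP : ZerosIn S a b c (m + 1) P)
    (hw : circFun a b c w ∉ S) {z : ℂ} (hz : (polarDeriv (m + 1) w P).IsRoot z) :
    circFun a b c z ∈ S := by
  by_contra hzS
  have hPz : P.eval z ≠ 0 := fun h => hzS (hP.root_mem z h)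
  have hzr : ∀ r ∈ P.roots, z ≠ r := fun r hr hzr => hPz (hzr ▸ (mem_roots'.mp hr).2)
  set σ := (P.roots.map fun r => (z - r)⁻¹).sum
  have hσ : (z - w) * σ = m + 1 := by
    have hlog := (IsAlgClosed.splits P).eval_derivative_eq_eval_mul_sum hPz
    simp only [one_div] at hlog
    rw [IsRoot, eval_polarDeriv, hlog] at hz
    push_cast at hz
    exact mul_left_cancel₀ hPz (by linear_combination -hz)
  have hzw : z ≠ w := by
    rintro rfl
    rw [sub_self, zero_mul] at hσ
    exact Nat.cast_add_one_ne_zero m hσ.symm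
  -- the zeros of `P`, those at `∞` included, under the Möbius map `t ↦ (z - t)⁻¹`
  set T := Multiset.replicate (m + 1 - P.natDegree) 0 + P.roots.map fun r => (z - r)⁻¹
  have hcard : Multiset.card T = m + 1 := by
    simp only [T, Multiset.card_add, Multiset.card_replicate, Multiset.card_map,
      IsAlgClosed.card_roots_eq_natDegree]
    have := hP.natDegree_le
    omega
  have hcentroid : (Multiset.card T : ℝ)⁻¹ • T.sum = (z - w)⁻¹ := by
    have hsum : T.sum = σ := by simp [T, σ]
    rw [hcard, hsum, Complex.real_smul]
    push_cast
    apply eq_inv_of_mul_eq_one_left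
    rw [mul_assoc, mul_comm σ, hσ, inv_mul_cancel₀ (Nat.cast_add_one_ne_zero m)]
  have hT : ∀ t ∈ T, circFun (circFun a b c z) (-(2 * a * z + conj b)) a t ∈ S := by
    intro t ht
    rcases Multiset.mem_add.mp ht with ht | ht
    · rw [Multiset.eq_of_mem_replicate ht]
      simpa [circFun] using hP.infty_mem (by
        by_contra h
        simp [Nat.sub_eq_zero_of_le (not_lt.mp h)] at ht)
    · obtain ⟨r, hr, rfl⟩ := Multiset.mem_map.mp ht
      exact (hS.circFun_inv_sub_mem_iff (hzr r hr)).mpr (hP.root_mem r (mem_roots'.mp hr).2)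
  have hmean := (hS.convex_circFun_preimage (hS.nonneg_of_notMem hzS) _ _).inv_card_smul_sum_mem
    (Multiset.card_pos.mp (by omega)) hT
  rw [hcentroid] at hmean
  exact hw ((hS.circFun_inv_sub_mem_iff hzw).mp hmean)

lemma infty_mem_polarDeriv (hS : IsNegCone S) (hP : ZerosIn S a b c (m + 1) P)
    (hw : circFun a b c w ∉ S) (hdeg : (polarDeriv (m + 1) w P).natDegree < m) : a ∈ S := by
  by_contra ha
  have hdegP : P.natDegree = m + 1 := by
    by_contra h
    exact ha (hP.infty_mem (lt_of_le_of_ne hP.natDegree_le h))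
  -- the polar derivative loses degree only at the centroid of the roots of `P`
  have hcoeff := coeff_eq_zero_of_natDegree_lt hdeg
  have hnext := (IsAlgClosed.splits P).nextCoeff_eq_neg_sum_roots_mul_leadingCoeff
  rw [nextCoeff_of_natDegree_pos (by omega), hdegP, Nat.add_sub_cancel] at hnext
  have hlc : P.coeff (m + 1) = P.leadingCoeff := by rw [leadingCoeff, hdegP]
  rw [coeff_polarDeriv, hnext, hlc] at hcoeff
  push_cast at hcoeff
  have hcentroid : ((m + 1 : ℕ) : ℝ)⁻¹ • P.roots.sum = w := by
    rw [Complex.real_smul, eq_comm]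
    push_cast
    rw [eq_inv_mul_iff_mul_eq₀ (Nat.cast_add_one_ne_zero m)]
    apply mul_left_cancel₀ (leadingCoeff_ne_zero.mpr hP.ne_zero)
    linear_combination hcoeff
  have hmean := (hS.convex_circFun_preimage (hS.nonneg_of_notMem ha) b c).inv_card_smul_sum_mem
    (T := P.roots) (by rw [← Multiset.card_pos, IsAlgClosed.card_roots_eq_natDegree]; omega)
    fun r hr => hP.root_mem r (mem_roots'.mp hr).2
  rw [IsAlgClosed.card_roots_eq_natDegree, hdegP, hcentroid] at hmean
  exact hw hmean

/-- Laguerre's theorem. -/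
theorem polarDeriv (hS : IsNegCone S) (hP : ZerosIn S a b c (m + 1) P)
    (hw : circFun a b c w ∉ S) : ZerosIn S a b c m (polarDeriv (m + 1) w P) where
  ne_zero h := by
    have := eval_polarDeriv (m + 1) w w P
    rw [h, eval_zero, sub_self, zero_mul, add_zero, eq_comm, mul_eq_zero] at this
    exact this.elim (Nat.cast_ne_zero.mpr m.succ_ne_zero) fun hPw => hw (hP.root_mem w hPw)
  natDegree_le := natDegree_polarDeriv_le w hP.natDegree_le
  root_mem _ := hP.root_polarDeriv_mem hS hw
  infty_mem := hP.infty_mem_polarDeriv hS hw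

/-- Grace's theorem. -/
theorem apol_prod_ne_zero (hS : IsNegCone S) {s : Multiset ℂ}
    (hP : ZerosIn S a b c (Multiset.card s) P) (hs : ∀ w ∈ s, circFun a b c w ∉ S) :
    apol (Multiset.card s) P (s.map fun r => X - C r).prod ≠ 0 := by
  induction s using Multiset.induction generalizing P with
  | empty =>
    have hP0 := eq_C_of_natDegree_eq_zero (Nat.le_zero.mp hP.natDegree_le)
    have hc : P.coeff 0 ≠ 0 := fun h => hP.ne_zero (by rw [hP0, h, C_0])
    simpa [apol] using hc
  | cons w t ih =>
    rw [Multiset.card_cons] at hP ⊢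
    rw [Multiset.map_cons, Multiset.prod_cons]
    have hR : (t.map fun r => X - C r).prod.natDegree ≤ Multiset.card t := by
      rw [natDegree_multiset_prod_X_sub_C_eq_card]
    have := ih (hP.polarDeriv hS (hs w (Multiset.mem_cons_self w t)))
      fun r hr => hs r (Multiset.mem_cons_of_mem hr)
    rw [apol_polarDeriv w P hR] at this
    exact right_ne_zero_of_mul this

end ZerosIn

section Composition

variable {S : Set ℝ} {a : ℝ} {b : ℂ} {c : ℝ} {q f : ℂ[X]}

lemma zerosIn_comp (hqd : 0 < q.natDegree) (hf0 : f ≠ 0)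
    (hroots : ∀ z, f.IsRoot z → z ∈ innerImage q (circFun a b c ⁻¹' S)) :
    ZerosIn S a b c (f.natDegree * q.natDegree) (f.comp q) where
  ne_zero := by
    rw [Ne, comp_eq_zero_iff, not_or, not_and_or]
    refine ⟨hf0, Or.inr fun h => ?_⟩
    rw [h, natDegree_C] at hqd
    exact lt_irrefl 0 hqd
  natDegree_le := natDegree_comp.le
  root_mem z hz := hroots _ (by simpa [IsRoot, eval_comp] using hz) z rfl
  infty_mem h := absurd natDegree_comp h.ne

theorem Sfun_ne_zero (hS : IsNegCone S) (hq : q.Monic) (hqd : 0 < q.natDegree) {n : ℕ}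
    (hf0 : f ≠ 0) (hf : f.natDegree = n)
    (hroots : ∀ z, f.IsRoot z → z ∈ innerImage q (circFun a b c ⁻¹' S))
    {u : Fin n → ℂ} (hu : ∀ k, u k ∉ (fun w => q.eval w) '' (circFun a b c ⁻¹' S)) :
    Sfun q n f u ≠ 0 := by
  set Q := ∏ j, (q - C (u j))
  have hfac : ∀ j, (q - C (u j)).Monic := fun j =>
    hq.sub_of_left (degree_C_le.trans_lt (natDegree_pos_iff_degree_pos.mp hqd))
  have hQ : Q.Monic := monic_prod_of_monic _ _ fun j _ => hfac j
  have hQdeg : Multiset.card Q.roots = n * q.natDegree := by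
    simp [Q, IsAlgClosed.card_roots_eq_natDegree,
      natDegree_prod_of_monic _ _ fun j _ => hfac j, natDegree_sub_C]
  have hQroots : ∀ w ∈ Q.roots, circFun a b c w ∉ S := by
    intro w hw hwS
    have hQw := (mem_roots'.mp hw).2
    simp only [Q, IsRoot, eval_prod, eval_sub, eval_C, Finset.prod_eq_zero_iff,
      Finset.mem_univ, true_and, sub_eq_zero] at hQw
    obtain ⟨j, hj⟩ := hQw
    exact hu j ⟨w, hwS, hj⟩
  have hP := zerosIn_comp hqd hf0 hroots
  rw [hf, ← hQdeg] at hP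
  have := hP.apol_prod_ne_zero hS hQroots
  rwa [hQdeg, ← (IsAlgClosed.splits Q).eq_prod_roots_of_monic hQ] at this

end Composition

theorem stmt_10_general (D : Set ℂ) (hD : IsCircularDomain D)
    (d : ℕ) (hd : 1 ≤ d) (q : Polynomial ℂ) (hq : q.Monic) (hqd : q.natDegree = d)
    (n : ℕ) (hn : 1 ≤ n)
    (f : Polynomial ℂ) (hf : f.natDegree = n)
    (hroots : ∀ z : ℂ, f.IsRoot z → z ∈ innerImage q D)
    (T : Polynomial ℂ)
    (hT : ∀ u : ℂ, T.eval u = apol (n * d) (f.comp q) ((q - Polynomial.C u) ^ n)) :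
    (∀ z : ℂ, T.IsRoot z → z ∈ (fun w => q.eval w) '' D) ∧
    (∀ u : Fin n → ℂ, Sfun q n f u = 0 → ∃ k : Fin n, u k ∈ (fun w => q.eval w) '' D) := by
  obtain ⟨S, a, b, c, hS, rfl⟩ := hD.exists_isNegCone
  have hf0 : f ≠ 0 := by
    rintro rfl
    rw [natDegree_zero] at hf
    omega
  have hSfun (u : Fin n → ℂ) (hu : Sfun q n f u = 0) :
      ∃ k, u k ∈ (fun w => q.eval w) '' (circFun a b c ⁻¹' S) := by
    by_contra! hno
    exact Sfun_ne_zero hS hq (by omega) hf0 hf hroots hno hu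
  refine ⟨fun z hz => ?_, hSfun⟩
  obtain ⟨_, hk⟩ := hSfun (fun _ => z) (by
    rw [Sfun, hqd, Finset.prod_const, Finset.card_univ, Fintype.card_fin, ← hT z]
    exact hz)
  exact hk

/-- Generalized Walsh theorem, part 1. -/
theorem stmt_10 (D : Set ℂ) (hD : IsCircularDomain D)
    (d : ℕ) (hd : 1 ≤ d) (q : Polynomial ℂ) (hq : q.Monic) (hqd : q.natDegree = d)
    (n : ℕ) (hn : 1 ≤ n)
    (f : Polynomial ℂ) (hf : f.natDegree = n)
    (hroots : ∀ z : ℂ, f.IsRoot z → z ∈ innerImage q D)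
    (T : Polynomial ℂ) (hTdeg : T.degree ≤ (n : ℕ))
    (hT : ∀ u : ℂ, T.eval u = apol (n * d) (f.comp q) ((q - Polynomial.C u) ^ n)) :
    (∀ z : ℂ, T.IsRoot z → z ∈ (fun w => q.eval w) '' D) ∧
    (∀ u : Fin n → ℂ, Sfun q n f u = 0 → ∃ k : Fin n, u k ∈ (fun w => q.eval w) '' D) :=
  stmt_10_general D hD d hd q hq hqd n hn f hf hroots T hT
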